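/- arXiv:1409.7850 — 4 statements merged into one kernel-verified Lean document; each statement's English description precedes it below -/
import Mathlib

section
/- For all real numbers s and c with s > c > 0, one has Φ(s)² > Φ(s+c)·Φ(s−c). -/
open MeasureTheory Set

/-- The standard normal cumulative distribution function
`Φ(t) = ∫_{−∞}^{t} (1/√(2π)) e^{−τ²/2} dτ`. -/
noncomputable def stdNormalCDF (t : ℝ) : ℝ :=
  ∫ τ in Set.Iic t, (Real.sqrt (2 * Real.pi))⁻¹ * Real.exp (-τ ^ 2 / 2)

private noncomputable def npdf (τ : ℝ) : ℝ :=
  (Real.sqrt (2 * Real.pi))⁻¹ * Real.exp (-τ ^ 2 / 2)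

private lemma npdf_pos (τ : ℝ) : 0 < npdf τ := by
  have h2π : (0:ℝ) < 2 * Real.pi := by positivity
  exact mul_pos (inv_pos.2 (Real.sqrt_pos.2 h2π)) (Real.exp_pos _)

private lemma npdf_cont : Continuous npdf := by
  unfold npdf; continuity

private lemma npdf_int : Integrable npdf := by
  have h : Integrable fun x : ℝ => Real.exp (-(1/2 : ℝ) * x ^ 2) :=
    integrable_exp_neg_mul_sq (by norm_num)
  have := h.const_mul (Real.sqrt (2 * Real.pi))⁻¹
  refine this.congr ?_
  filter_upwards with x
  unfold npdf
  ring_nf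

private lemma npdf_lt (a b : ℝ) (ha : 0 ≤ a) (hab : a < b) : npdf b < npdf a := by
  unfold npdf
  have h2π : (0:ℝ) < Real.sqrt (2 * Real.pi) := Real.sqrt_pos.2 (by positivity)
  have hsq : a ^ 2 < b ^ 2 := by nlinarith
  have : Real.exp (-b ^ 2 / 2) < Real.exp (-a ^ 2 / 2) := Real.exp_lt_exp.2 (by linarith)
  exact mul_lt_mul_of_pos_left this (inv_pos.2 h2π)

/-- For all real `s` and `c` with `s > c > 0`, `Φ(s)² > Φ(s+c)·Φ(s−c)`. -/
theorem stdNormalCDF_sq_gt_mul (s c : ℝ) (hsc : s > c) (hc : c > 0) :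
    (stdNormalCDF s) ^ 2 > stdNormalCDF (s + c) * stdNormalCDF (s - c) := by
  have hint : ∀ t : ℝ, IntegrableOn npdf (Iic t) := fun t => npdf_int.integrableOn
  have hdiff : ∀ a b : ℝ, stdNormalCDF b - stdNormalCDF a = ∫ x in a..b, npdf x := by
    intro a b
    exact intervalIntegral.integral_Iic_sub_Iic (hint a) (hint b)
  set P := stdNormalCDF s with hP
  set A := ∫ x in s..(s+c), npdf x with hA
  set B := ∫ x in (s-c)..s, npdf x with hB
  have hAeq : stdNormalCDF (s + c) = P + A := by
    have := hdiff s (s + c); linarith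
  have hBeq : stdNormalCDF (s - c) = P - B := by
    have := hdiff (s - c) s; linarith
  -- A > 0
  have hApos : 0 < A := by
    rw [hA]
    exact intervalIntegral.intervalIntegral_pos_of_pos
      (npdf_int.intervalIntegrable) npdf_pos (by linarith)
  -- A < B via substitution
  have hAB : A < B := by
    have hsub : A = ∫ x in (s-c)..s, npdf (x + c) := by
      rw [hA, intervalIntegral.integral_comp_add_right (f := npdf) c]
      norm_num
    rw [hsub, hB]
    apply intervalIntegral.integral_lt_integral_of_continuousOn_of_le_of_exists_lt
      (by linarith)
      ((npdf_cont.comp (by continuity)).continuousOn) npdf_cont.continuousOn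
    · intro x hx
      exact (npdf_lt x (x + c) (by rcases hx with ⟨h1, h2⟩; linarith) (by linarith)).le
    · exact ⟨s, ⟨by linarith, le_refl s⟩, npdf_lt s (s + c) (by linarith) (by linarith)⟩
  -- P > 0
  have hPpos : 0 < P := by
    have h1 : stdNormalCDF s - stdNormalCDF (s - 1) = ∫ x in (s-1)..s, npdf x := hdiff _ _
    have h2 : 0 < ∫ x in (s-1)..s, npdf x :=
      intervalIntegral.intervalIntegral_pos_of_pos (npdf_int.intervalIntegrable)
        npdf_pos (by linarith)
    have h3 : 0 ≤ stdNormalCDF (s - 1) := by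
      rw [stdNormalCDF]
      exact setIntegral_nonneg measurableSet_Iic (fun x _ => (npdf_pos x).le)
    have : 0 < stdNormalCDF s := by linarith
    exact this
  rw [hAeq, hBeq]
  nlinarith
end

section
/- Let n ≥ 1 be an integer and a > 0 a real number. For any vector t ∈ ℝⁿ with ∑_{i=1}^{n} t_i² ≤ n·a², one has ∏_{i=1}^{n} Φ(t_i) ≤ Φ(a)ⁿ. -/
open scoped BigOperators

open MeasureTheory Set Real

/-- The standard normal density. -/
noncomputable def stdPDF (τ : ℝ) : ℝ :=
  (Real.sqrt (2 * Real.pi))⁻¹ * Real.exp (-τ ^ 2 / 2)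

lemma stdPDF_pos (τ : ℝ) : 0 < stdPDF τ := by
  have : (0:ℝ) < Real.sqrt (2 * Real.pi) := Real.sqrt_pos.2 (by positivity)
  exact mul_pos (inv_pos.2 this) (Real.exp_pos _)

lemma stdPDF_continuous : Continuous stdPDF := by
  unfold stdPDF; fun_prop

lemma stdPDF_integrable : Integrable stdPDF := by
  have h : Integrable (fun x : ℝ => Real.exp (-(1/2 : ℝ) * x ^ 2)) :=
    integrable_exp_neg_mul_sq (by norm_num)
  have h2 := h.const_mul (Real.sqrt (2 * Real.pi))⁻¹
  have : stdPDF = fun x : ℝ => (Real.sqrt (2 * Real.pi))⁻¹ * Real.exp (-(1/2 : ℝ) * x ^ 2) := by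
    funext x; unfold stdPDF; congr 1; ring_nf
  rw [this]; exact h2

lemma stdNormalCDF_eq (u : ℝ) : stdNormalCDF u = ∫ τ in Iic u, stdPDF τ := rfl

lemma stdNormalCDF_pos (u : ℝ) : 0 < stdNormalCDF u := by
  rw [stdNormalCDF_eq]
  rw [setIntegral_pos_iff_support_of_nonneg_ae
    (Filter.Eventually.of_forall fun x => (stdPDF_pos x).le) stdPDF_integrable.integrableOn]
  have hsupp : Function.support stdPDF = univ := by
    ext x; simp [Function.mem_support, (stdPDF_pos x).ne']
  rw [hsupp, univ_inter, Real.volume_Iic]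
  exact ENNReal.coe_lt_top.trans_le le_top |>.trans_le le_rfl |>.le.lt_of_ne (by simp) |>.trans_le le_rfl

lemma stdNormalCDF_mono : Monotone stdNormalCDF := by
  intro x y hxy
  rw [stdNormalCDF_eq, stdNormalCDF_eq]
  exact setIntegral_mono_set stdPDF_integrable.integrableOn
    (Filter.Eventually.of_forall fun x => (stdPDF_pos x).le)
    (HasSubset.Subset.eventuallyLE (Iic_subset_Iic.2 hxy))

lemma hasDerivAt_stdNormalCDF (t : ℝ) : HasDerivAt stdNormalCDF (stdPDF t) t := by
  have key : stdNormalCDF = fun u => (∫ τ in Iic (0:ℝ), stdPDF τ) + ∫ τ in (0:ℝ)..u, stdPDF τ := by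
    funext u
    rw [stdNormalCDF_eq, ← intervalIntegral.integral_Iic_sub_Iic
      stdPDF_integrable.integrableOn stdPDF_integrable.integrableOn]
    ring
  rw [key]
  exact (intervalIntegral.integral_hasDerivAt_right
    stdPDF_integrable.intervalIntegrable
    (stdPDF_continuous.stronglyMeasurableAtFilter _ _)
    stdPDF_continuous.continuousAt).const_add _

/-- The auxiliary function `g(x) = log Φ(√x)`. -/
noncomputable def logCDFsqrt (x : ℝ) : ℝ := Real.log (stdNormalCDF (Real.sqrt x))

lemma hasDerivAt_logCDFsqrt {x : ℝ} (hx : 0 < x) :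
    HasDerivAt logCDFsqrt
      (stdPDF (Real.sqrt x) * (1 / (2 * Real.sqrt x)) / stdNormalCDF (Real.sqrt x)) x := by
  have h1 := Real.hasDerivAt_sqrt hx.ne'
  have h2 := (hasDerivAt_stdNormalCDF (Real.sqrt x)).comp x h1
  exact h2.log (stdNormalCDF_pos _).ne'

lemma continuous_stdNormalCDF : Continuous stdNormalCDF :=
  continuous_iff_continuousAt.2 fun t => (hasDerivAt_stdNormalCDF t).continuousAt

lemma concaveOn_logCDFsqrt : ConcaveOn ℝ (Ici 0) logCDFsqrt := by
  have hcont : Continuous logCDFsqrt := by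
    apply continuous_iff_continuousAt.2
    intro x
    unfold logCDFsqrt
    exact ((continuous_stdNormalCDF.comp Real.continuous_sqrt).continuousAt).log
      (stdNormalCDF_pos _).ne'
  apply AntitoneOn.concaveOn_of_deriv (convex_Ici 0) hcont.continuousOn
  · rw [interior_Ici]
    exact fun x hx => (hasDerivAt_logCDFsqrt hx).differentiableAt.differentiableWithinAt
  · rw [interior_Ici]
    intro x hx y hy hxy
    rw [(hasDerivAt_logCDFsqrt hx).deriv, (hasDerivAt_logCDFsqrt hy).deriv]
    have hD : ∀ z : ℝ, 0 < z →
        stdPDF (Real.sqrt z) * (1 / (2 * Real.sqrt z)) / stdNormalCDF (Real.sqrt z)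
          = (Real.sqrt (2 * Real.pi))⁻¹ * Real.exp (-z / 2)
              / (2 * Real.sqrt z * stdNormalCDF (Real.sqrt z)) := by
      intro z hz
      rw [stdPDF, Real.sq_sqrt hz.le]
      field_simp
    rw [hD x hx, hD y hy]
    have hx' : (0:ℝ) < Real.sqrt x := Real.sqrt_pos.2 hx
    have hy' : (0:ℝ) < Real.sqrt y := Real.sqrt_pos.2 hy
    apply div_le_div₀
    · positivity
    · have : Real.exp (-y / 2) ≤ Real.exp (-x / 2) :=
        Real.exp_le_exp.2 (by linarith)
      have hc : (0:ℝ) ≤ (Real.sqrt (2 * Real.pi))⁻¹ := by positivity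
      exact mul_le_mul_of_nonneg_left this hc
    · exact mul_pos (by positivity) (stdNormalCDF_pos _)
    · apply mul_le_mul
      · exact mul_le_mul_of_nonneg_left (Real.sqrt_le_sqrt hxy) (by norm_num)
      · exact stdNormalCDF_mono (Real.sqrt_le_sqrt hxy)
      · exact (stdNormalCDF_pos _).le
      · positivity

lemma monotoneOn_logCDFsqrt : MonotoneOn logCDFsqrt (Ici 0) := by
  intro x _ y _ hxy
  apply Real.log_le_log (stdNormalCDF_pos _)
  exact stdNormalCDF_mono (Real.sqrt_le_sqrt hxy)

/-- For `n ≥ 1`, `a > 0` and `t ∈ ℝⁿ` with `∑ tᵢ² ≤ n·a²`, one has `∏ Φ(tᵢ) ≤ Φ(a)ⁿ`. -/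
theorem prod_stdNormalCDF_le_of_sum_sq_le (n : ℕ) (hn : 1 ≤ n) (a : ℝ) (ha : 0 < a)
    (t : Fin n → ℝ) (ht : ∑ i, (t i) ^ 2 ≤ n * a ^ 2) :
    ∏ i, stdNormalCDF (t i) ≤ (stdNormalCDF a) ^ n := by
  have hn0 : (0:ℝ) < n := by exact_mod_cast hn
  -- Step 1: replace t i by |t i|
  have h1 : ∏ i, stdNormalCDF (t i) ≤ ∏ i, stdNormalCDF |t i| :=
    Finset.prod_le_prod (fun i _ => (stdNormalCDF_pos _).le)
      (fun i _ => stdNormalCDF_mono (le_abs_self _))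
  -- Step 2: rewrite as exponential of sum of g
  have h2 : ∏ i, stdNormalCDF |t i| = Real.exp (∑ i, logCDFsqrt (t i ^ 2)) := by
    rw [Real.exp_sum]
    refine Finset.prod_congr rfl fun i _ => ?_
    rw [logCDFsqrt, Real.sqrt_sq_eq_abs, Real.exp_log (stdNormalCDF_pos _)]
  -- Step 3: Jensen
  have hw1 : ∑ _i : Fin n, (n:ℝ)⁻¹ = 1 := by
    rw [Finset.sum_const, Finset.card_univ, Fintype.card_fin, nsmul_eq_mul,
      mul_inv_cancel₀ hn0.ne']
  have hj := concaveOn_logCDFsqrt.le_map_sum (t := Finset.univ)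
    (w := fun _ : Fin n => (n:ℝ)⁻¹) (p := fun i => t i ^ 2)
    (fun i _ => by positivity) hw1 (fun i _ => Set.mem_Ici.2 (by positivity))
  simp only [smul_eq_mul] at hj
  -- mean is ≤ a²
  have hmean : ∑ i, (n:ℝ)⁻¹ * t i ^ 2 ≤ a ^ 2 := by
    rw [← Finset.mul_sum]
    rw [inv_mul_le_iff₀ hn0]
    linarith [ht]
  have hmem : ∑ i, (n:ℝ)⁻¹ * t i ^ 2 ∈ Ici (0:ℝ) :=
    Set.mem_Ici.2 (Finset.sum_nonneg fun i _ => by positivity)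
  have h3 : logCDFsqrt (∑ i, (n:ℝ)⁻¹ * t i ^ 2) ≤ logCDFsqrt (a ^ 2) :=
    monotoneOn_logCDFsqrt hmem (Set.mem_Ici.2 (sq_nonneg a)) hmean
  have h4 : ∑ i, logCDFsqrt (t i ^ 2) ≤ n * logCDFsqrt (a ^ 2) := by
    have : ∑ i, logCDFsqrt (t i ^ 2) = n * ∑ i, (n:ℝ)⁻¹ * logCDFsqrt (t i ^ 2) := by
      rw [Finset.mul_sum]
      refine Finset.sum_congr rfl fun i _ => ?_
      rw [← mul_assoc, mul_inv_cancel₀ hn0.ne', one_mul]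
    rw [this]
    have := hj.trans h3
    exact mul_le_mul_of_nonneg_left this hn0.le
  have h5 : Real.exp (∑ i, logCDFsqrt (t i ^ 2)) ≤ Real.exp ((n:ℝ) * logCDFsqrt (a ^ 2)) :=
    Real.exp_le_exp.2 h4
  have h6 : Real.exp ((n:ℝ) * logCDFsqrt (a ^ 2)) = (stdNormalCDF a) ^ n := by
    rw [Real.exp_nat_mul, logCDFsqrt, Real.sqrt_sq ha.le, Real.exp_log (stdNormalCDF_pos _)]
  calc ∏ i, stdNormalCDF (t i) ≤ ∏ i, stdNormalCDF |t i| := h1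
    _ = Real.exp (∑ i, logCDFsqrt (t i ^ 2)) := h2
    _ ≤ Real.exp ((n:ℝ) * logCDFsqrt (a ^ 2)) := h5
    _ = (stdNormalCDF a) ^ n := h6
end

section
/- Let K ≥ 1 and N_t ≥ 1 be integers, ρ > 0 and σ_q ≥ 0 real numbers, and let H be a K × N_t complex matrix satisfying Hᴴ·H = K·I_{N_t}, where Hᴴ is the conjugate transpose. Let x ∈ ℂ^{N_t} be a fixed vector, and let n′ ∈ ℂ^K be a random vector whose entries n′_k = a_k + i·b_k are built from 2K mutually independent real Gaussian random variables a_k, b_k, each with mean 0 and variance (1 + σ_q²·ρ/N_t)/2. Define ŷ = √(ρ/N_t)·H·x + n′ and x̌ = √(N_t/ρ)·(1/K)·Hᴴ·ŷ. Then (1/N_t)·E[‖x − x̌‖²] = (N_t·ρ⁻¹ + σ_q²)/K. -/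
/-!
Because `Hᴴ H = K • 1`, the zero-forcing estimate is `x` plus the filtered noise
`-(√(N_t/ρ)/K) • Hᴴ n′`, so each squared error entry is a sum of squares of linear combinations
of the `2K` independent centred Gaussians `a k`, `b k`. Its expectation is their common variance
times the sum of squared coefficients, giving `E ‖Hᴴ n′‖² = (1 + σ_q² ρ/N_t) ‖H‖_F²`, and
`‖H‖_F² = tr (Hᴴ H) = K N_t`.
-/

open MeasureTheory ProbabilityTheory Matrix
open scoped NNReal

section ZeroForcing

variable {m n : Type*} [Fintype m] [Fintype n] [DecidableEq n] {H : Matrix m n ℂ}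

lemma sum_sum_norm_sq_conjTranspose_of_conjTranspose_mul_self_eq {r : ℝ}
    (hH : Hᴴ * H = (r : ℂ) • 1) : ∑ i, ∑ k, ‖Hᴴ i k‖ ^ 2 = Fintype.card n * r := by
  have hcol (i : n) : ∑ k, ‖H k i‖ ^ 2 = r := by
    have h := congrFun (congrFun hH i) i
    simp only [mul_apply, conjTranspose_apply, Matrix.smul_apply, one_apply_eq, smul_eq_mul,
      mul_one, ← starRingEnd_apply, Complex.conj_mul'] at h
    exact_mod_cast h
  simp [conjTranspose_apply, hcol]

lemma sub_smul_conjTranspose_mulVec_eq {c s : ℂ} (hc : c ≠ 0) (hs : s ≠ 0)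
    (hH : Hᴴ * H = c • 1) (x : n → ℂ) (e : m → ℂ) :
    x - (s⁻¹ * (1 / c)) • (Hᴴ *ᵥ (s • (H *ᵥ x) + e)) = -(s⁻¹ / c) • (Hᴴ *ᵥ e) := by
  rw [mulVec_add, mulVec_smul, mulVec_mulVec, hH, smul_mulVec, one_mulVec, smul_add,
    smul_smul, smul_smul]
  have : s⁻¹ * (1 / c) * s * c = 1 := by field_simp
  rw [this, one_smul]
  module

end ZeroForcing

section ComplexNoise

variable {Ω κ : Type*} [Fintype κ]

def complexNoise (F : κ ⊕ κ → Ω → ℝ) (ω : Ω) (k : κ) : ℂ :=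
  F (.inl k) ω + F (.inr k) ω * Complex.I

lemma norm_sq_sum_mul_complexNoise (F : κ ⊕ κ → Ω → ℝ) (c : κ → ℂ) (ω : Ω) :
    ‖∑ k, c k * complexNoise F ω k‖ ^ 2 =
      (∑ j, Sum.elim (fun k => (c k).re) (fun k => -(c k).im) j * F j ω) ^ 2 +
      (∑ j, Sum.elim (fun k => (c k).im) (fun k => (c k).re) j * F j ω) ^ 2 := by
  simp only [Complex.sq_norm, Complex.normSq_apply, Complex.re_sum, Complex.im_sum,
    Fintype.sum_sum_type, Sum.elim_inl, Sum.elim_inr, complexNoise, Complex.mul_re,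
    Complex.mul_im, Complex.add_re, Complex.add_im, Complex.ofReal_re, Complex.ofReal_im,
    Complex.I_re, Complex.I_im, ← Finset.sum_add_distrib, ← sq]
  congr 2 <;> exact Finset.sum_congr rfl fun k _ => by ring

end ComplexNoise

section GaussianNoise

variable {Ω : Type*} [MeasurableSpace Ω] {P : Measure Ω} {v : ℝ≥0}

lemma aemeasurable_of_map_eq_gaussianReal {X : Ω → ℝ} {μ : ℝ}
    (hX : P.map X = gaussianReal μ v) : AEMeasurable X P :=
  .of_map_ne_zero (by simp [hX, NeZero.ne])

lemma memLp_of_map_eq_gaussianReal {X : Ω → ℝ} {μ : ℝ}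
    (hX : P.map X = gaussianReal μ v) (p : ℝ≥0) : MemLp X p P := by
  have h := memLp_id_gaussianReal (μ := μ) (v := v) p
  rw [← hX] at h
  exact (memLp_map_measure_iff aestronglyMeasurable_id
    (aemeasurable_of_map_eq_gaussianReal hX)).mp h

lemma integral_of_map_eq_gaussianReal {X : Ω → ℝ} {μ : ℝ}
    (hX : P.map X = gaussianReal μ v) : ∫ ω, X ω ∂P = μ := by
  rw [← integral_id_gaussianReal (μ := μ) (v := v), ← hX]
  exact (integral_map (aemeasurable_of_map_eq_gaussianReal hX) aestronglyMeasurable_id).symm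

lemma variance_of_map_eq_gaussianReal {X : Ω → ℝ} {μ : ℝ}
    (hX : P.map X = gaussianReal μ v) : Var[X; P] = v := by
  rw [← variance_id_gaussianReal (μ := μ) (v := v), ← hX,
    variance_id_map (aemeasurable_of_map_eq_gaussianReal hX)]

section RealSum

variable {ι : Type*} [Fintype ι] {F : ι → Ω → ℝ}

lemma memLp_sum_mul_of_map_eq_gaussianReal (hF : ∀ i, P.map (F i) = gaussianReal 0 v)
    (w : ι → ℝ) : MemLp (fun ω => ∑ i, w i * F i ω) 2 P :=
  memLp_finsetSum _ fun i _ => (memLp_of_map_eq_gaussianReal (hF i) 2).const_mul (w i)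

lemma integral_sq_sum_mul_of_iIndepFun [IsFiniteMeasure P] (hindep : iIndepFun F P)
    (hF : ∀ i, P.map (F i) = gaussianReal 0 v) (w : ι → ℝ) :
    ∫ ω, (∑ i, w i * F i ω) ^ 2 ∂P = v * ∑ i, w i ^ 2 := by
  have hmem i : MemLp (fun ω => w i * F i ω) 2 P :=
    (memLp_of_map_eq_gaussianReal (hF i) 2).const_mul _
  have hmean : ∫ ω, ∑ i, w i * F i ω ∂P = 0 := by
    rw [integral_finsetSum _ fun i _ => (hmem i).integrable one_le_two]
    simp [integral_const_mul, integral_of_map_eq_gaussianReal (hF _)]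
  have hvar : Var[∑ i, fun ω => w i * F i ω; P] = ∑ i, Var[fun ω => w i * F i ω; P] :=
    IndepFun.variance_sum (fun i _ => hmem i) fun i _ j _ hij =>
      (hindep.indepFun hij).comp (measurable_const_mul (w i)) (measurable_const_mul (w j))
  calc ∫ ω, (∑ i, w i * F i ω) ^ 2 ∂P
      = Var[fun ω => ∑ i, w i * F i ω; P] :=
        (variance_of_integral_eq_zero
          (memLp_sum_mul_of_map_eq_gaussianReal hF w).aemeasurable hmean).symm
    _ = ∑ i, Var[fun ω => w i * F i ω; P] := by rwa [Finset.sum_fn] at hvar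
    _ = v * ∑ i, w i ^ 2 := by
        rw [Finset.mul_sum]
        exact Finset.sum_congr rfl fun i _ => by
          rw [variance_const_mul, variance_of_map_eq_gaussianReal (hF i), mul_comm]

end RealSum

section ComplexSum

variable {ι κ : Type*} [Fintype ι] [Fintype κ] {F : κ ⊕ κ → Ω → ℝ}

lemma integrable_norm_sq_sum_mul_complexNoise [IsFiniteMeasure P]
    (hF : ∀ j, P.map (F j) = gaussianReal 0 v) (c : κ → ℂ) :
    Integrable (fun ω => ‖∑ k, c k * complexNoise F ω k‖ ^ 2) P := by
  simp only [norm_sq_sum_mul_complexNoise]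
  exact (memLp_sum_mul_of_map_eq_gaussianReal hF _).integrable_sq.add
    (memLp_sum_mul_of_map_eq_gaussianReal hF _).integrable_sq

lemma integral_norm_sq_sum_mul_complexNoise [IsFiniteMeasure P] (hindep : iIndepFun F P)
    (hF : ∀ j, P.map (F j) = gaussianReal 0 v) (c : κ → ℂ) :
    ∫ ω, ‖∑ k, c k * complexNoise F ω k‖ ^ 2 ∂P = 2 * v * ∑ k, ‖c k‖ ^ 2 := by
  simp only [norm_sq_sum_mul_complexNoise]
  rw [integral_add (memLp_sum_mul_of_map_eq_gaussianReal hF _).integrable_sq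
    (memLp_sum_mul_of_map_eq_gaussianReal hF _).integrable_sq,
    integral_sq_sum_mul_of_iIndepFun hindep hF, integral_sq_sum_mul_of_iIndepFun hindep hF]
  simp only [Fintype.sum_sum_type, Sum.elim_inl, Sum.elim_inr, Complex.sq_norm,
    Complex.normSq_apply, Finset.mul_sum, ← Finset.sum_add_distrib]
  exact Finset.sum_congr rfl fun k _ => by ring

lemma integral_sum_norm_sq_mulVec_complexNoise [IsFiniteMeasure P] (hindep : iIndepFun F P)
    (hF : ∀ j, P.map (F j) = gaussianReal 0 v) (A : Matrix ι κ ℂ) :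
    ∫ ω, ∑ i, ‖(A *ᵥ complexNoise F ω) i‖ ^ 2 ∂P = 2 * v * ∑ i, ∑ k, ‖A i k‖ ^ 2 := by
  simp only [mulVec, dotProduct]
  rw [integral_finsetSum _ fun i _ => integrable_norm_sq_sum_mul_complexNoise hF (A i),
    Finset.mul_sum]
  exact Finset.sum_congr rfl fun i _ => integral_norm_sq_sum_mul_complexNoise hindep hF (A i)

end ComplexSum

end GaussianNoise

theorem mse_zf_estimator_general (Ω : Type*) [MeasurableSpace Ω]
    (P : Measure Ω) [IsProbabilityMeasure P] (K Nt : ℕ) (hK : 1 ≤ K) (hNt : 1 ≤ Nt)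
    (ρ : ℝ) (hρ : 0 < ρ) (σq : ℝ)
    (H : Matrix (Fin K) (Fin Nt) ℂ) (hH : Hᴴ * H = (K : ℂ) • 1)
    (x : Fin Nt → ℂ)
    (a b : Ω → Fin K → ℝ)
    (hindep : iIndepFun
      (Sum.elim (fun k ω => a ω k) (fun k ω => b ω k)) P)
    (hlawa : ∀ k, P.map (fun ω => a ω k) =
      gaussianReal 0 (Real.toNNReal ((1 + σq ^ 2 * ρ / Nt) / 2)))
    (hlawb : ∀ k, P.map (fun ω => b ω k) =
      gaussianReal 0 (Real.toNNReal ((1 + σq ^ 2 * ρ / Nt) / 2)))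
    (n' : Ω → Fin K → ℂ) (hn' : ∀ ω k, n' ω k = a ω k + b ω k * Complex.I)
    (yhat : Ω → Fin K → ℂ)
    (hyhat : ∀ ω k, yhat ω k = (Real.sqrt (ρ / Nt) : ℂ) * H.mulVec x k + n' ω k)
    (xcheck : Ω → Fin Nt → ℂ)
    (hxcheck : ∀ ω i, xcheck ω i =
      (Real.sqrt (Nt / ρ) : ℂ) * (1 / K : ℂ) * Hᴴ.mulVec (yhat ω) i) :
    (1 / Nt : ℝ) * ∫ ω, ∑ i, ‖x i - xcheck ω i‖ ^ 2 ∂P = (Nt * ρ⁻¹ + σq ^ 2) / K := by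
  set F := Sum.elim (fun k ω => a ω k) (fun k ω => b ω k)
  set s : ℂ := (Real.sqrt (ρ / Nt) : ℂ)
  have hK0 : (K : ℂ) ≠ 0 := by exact_mod_cast (by omega : K ≠ 0)
  have hs : s ≠ 0 := by simp only [s, Complex.ofReal_ne_zero]; positivity
  have hF : ∀ j, P.map (F j) = gaussianReal 0 (Real.toNNReal ((1 + σq ^ 2 * ρ / Nt) / 2)) := by
    rintro (k | k)
    exacts [hlawa k, hlawb k]
  have hs' : (Real.sqrt (Nt / ρ) : ℂ) = s⁻¹ := by
    rw [← Complex.ofReal_inv, ← Real.sqrt_inv, inv_div]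
  have herr ω : x - xcheck ω = -(s⁻¹ / K) • (Hᴴ *ᵥ complexNoise F ω) := by
    have hy : yhat ω = s • (H *ᵥ x) + complexNoise F ω := funext fun k => by rw [hyhat, hn']; rfl
    have hxcheck' : xcheck ω = (s⁻¹ * (1 / K)) • (Hᴴ *ᵥ yhat ω) := by
      ext i
      rw [hxcheck, hs']
      rfl
    rw [hxcheck', hy, sub_smul_conjTranspose_mulVec_eq hK0 hs hH]
  have hscale : ‖s⁻¹ / K‖ ^ 2 = Nt / ρ / K ^ 2 := by
    rw [norm_div, norm_inv, Complex.norm_real, Real.norm_of_nonneg (Real.sqrt_nonneg _),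
      Complex.norm_natCast, div_pow, inv_pow, Real.sq_sqrt (by positivity), inv_div]
  have hpt ω : ∑ i, ‖x i - xcheck ω i‖ ^ 2 =
      Nt / ρ / K ^ 2 * ∑ i, ‖(Hᴴ *ᵥ complexNoise F ω) i‖ ^ 2 := by
    rw [Finset.mul_sum]
    refine Finset.sum_congr rfl fun i _ => ?_
    rw [← Pi.sub_apply, herr, Pi.smul_apply, smul_eq_mul, norm_mul, norm_neg, mul_pow, hscale]
  simp_rw [hpt]
  rw [integral_const_mul, integral_sum_norm_sq_mulVec_complexNoise hindep hF,
    sum_sum_norm_sq_conjTranspose_of_conjTranspose_mul_self_eq (r := K) (by exact_mod_cast hH),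
    Real.coe_toNNReal _ (by positivity), Fintype.card_fin]
  field_simp

/-- Lemma 3: under the Gaussian approximation of the quantization error and the
orthogonality condition `Hᴴ·H = K·I`, the MSE of the zero-forcing-type estimator equals
`(N_t·ρ⁻¹ + σ_q²)/K`. -/
theorem mse_zf_estimator (Ω : Type*) [MeasurableSpace Ω]
    (P : Measure Ω) [IsProbabilityMeasure P] (K Nt : ℕ) (hK : 1 ≤ K) (hNt : 1 ≤ Nt)
    (ρ : ℝ) (hρ : 0 < ρ) (σq : ℝ) (hσq : 0 ≤ σq)
    (H : Matrix (Fin K) (Fin Nt) ℂ) (hH : Hᴴ * H = (K : ℂ) • 1)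
    (x : Fin Nt → ℂ)
    (a b : Ω → Fin K → ℝ)
    (ham : ∀ k, Measurable fun ω => a ω k) (hbm : ∀ k, Measurable fun ω => b ω k)
    (hindep : iIndepFun
      (Sum.elim (fun k ω => a ω k) (fun k ω => b ω k)) P)
    (hlawa : ∀ k, P.map (fun ω => a ω k) =
      gaussianReal 0 (Real.toNNReal ((1 + σq ^ 2 * ρ / Nt) / 2)))
    (hlawb : ∀ k, P.map (fun ω => b ω k) =
      gaussianReal 0 (Real.toNNReal ((1 + σq ^ 2 * ρ / Nt) / 2)))
    (n' : Ω → Fin K → ℂ) (hn' : ∀ ω k, n' ω k = a ω k + b ω k * Complex.I)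
    (yhat : Ω → Fin K → ℂ)
    (hyhat : ∀ ω k, yhat ω k = (Real.sqrt (ρ / Nt) : ℂ) * H.mulVec x k + n' ω k)
    (xcheck : Ω → Fin Nt → ℂ)
    (hxcheck : ∀ ω i, xcheck ω i =
      (Real.sqrt (Nt / ρ) : ℂ) * (1 / K : ℂ) * Hᴴ.mulVec (yhat ω) i) :
    (1 / Nt : ℝ) * ∫ ω, ∑ i, ‖x i - xcheck ω i‖ ^ 2 ∂P = (Nt * ρ⁻¹ + σq ^ 2) / K :=
  mse_zf_estimator_general Ω P K Nt hK hNt ρ hρ σq H hH x a b hindep hlawa hlawb n' hn' yhat hyhat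
    xcheck hxcheck
end

section
/- Let K ≥ 1 and N_t ≥ 1 be integers and σ_q ≥ 0. For each ρ > 0, let H be a K × N_t complex matrix with Hᴴ·H = K·I_{N_t}, let x ∈ ℂ^{N_t} be fixed, let n′(ρ) ∈ ℂ^K be a random vector whose entries have mutually independent real and imaginary parts, each Gaussian with mean 0 and variance (1 + σ_q²·ρ/N_t)/2, and define MSE(ρ) = (1/N_t)·E[‖x − √(N_t/ρ)·(1/K)·Hᴴ·(√(ρ/N_t)·H·x + n′(ρ))‖²]. Then MSE(ρ) → σ_q²/K as ρ → ∞. -/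
/-!
Since `Hᴴ H = K • 1`, the zero-forcing estimator recovers the signal exactly and the estimation
error is `-(√(Nt/ρ) / K) • Hᴴ n'`. The `2K` real noise components are independent and centred
with variance `v = (1 + σq²ρ/Nt)/2`, so `E‖Hᴴ n'‖² = 2v ‖H‖_F² = 2v K Nt`. Hence
`MSE ρ = Nt/(ρK) + σq²/K` for every `ρ > 0`, which tends to `σq²/K`.
-/

open MeasureTheory ProbabilityTheory Matrix Filter

section GaussianMoments

variable {Ω : Type*} [MeasurableSpace Ω] {P : Measure Ω} {X : Ω → ℝ} {v : NNReal}

lemma memLp_two_of_map_eq_gaussianReal (hX : Measurable X) (hlaw : P.map X = gaussianReal 0 v) :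
    MemLp X 2 P := by
  have h := memLp_id_gaussianReal' (μ := 0) (v := v) 2 (by simp)
  rw [← hlaw] at h
  exact (memLp_map_measure_iff aestronglyMeasurable_id hX.aemeasurable).1 h

lemma integral_eq_zero_of_map_eq_gaussianReal (hX : Measurable X)
    (hlaw : P.map X = gaussianReal 0 v) : P[X] = 0 := by
  rw [← integral_id_gaussianReal (μ := 0) (v := v), ← hlaw,
    integral_map hX.aemeasurable measurable_id'.aestronglyMeasurable]

lemma variance_eq_of_map_eq_gaussianReal (hX : Measurable X)
    (hlaw : P.map X = gaussianReal 0 v) : Var[X; P] = v := by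
  rw [← variance_id_gaussianReal (μ := 0) (v := v), ← hlaw,
    variance_map aemeasurable_id hX.aemeasurable]
  rfl

end GaussianMoments

section LinearCombination

variable {Ω ι : Type*} [MeasurableSpace Ω] {P : Measure Ω} [Fintype ι] {e : ι → Ω → ℝ}

lemma memLp_two_sum_mul (he : ∀ j, MemLp (e j) 2 P) (α : ι → ℝ) :
    MemLp (fun ω => ∑ j, α j * e j ω) 2 P :=
  memLp_finsetSum _ fun j _ => (he j).const_mul (α j)

lemma variance_sum_mul_of_iIndepFun (he : ∀ j, MemLp (e j) 2 P) (hind : iIndepFun e P)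
    (α : ι → ℝ) : Var[fun ω => ∑ j, α j * e j ω; P] = ∑ j, α j ^ 2 * Var[e j; P] := by
  have hsum := IndepFun.variance_sum (μ := P) (s := Finset.univ) (X := fun j ω => α j * e j ω)
    (fun j _ => (he j).const_mul (α j)) fun i _ j _ hij =>
      (hind.indepFun hij).comp (measurable_const_mul (α i)) (measurable_const_mul (α j))
  simp only [variance_const_mul] at hsum
  rw [← hsum]
  congr 1 with ω
  simp

lemma integral_sq_sum_mul_of_iIndepFun_s13 [IsFiniteMeasure P] (he : ∀ j, MemLp (e j) 2 P)
    (hmean : ∀ j, P[e j] = 0) (hind : iIndepFun e P) (α : ι → ℝ) :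
    ∫ ω, (∑ j, α j * e j ω) ^ 2 ∂P = ∑ j, α j ^ 2 * Var[e j; P] := by
  have hmean_sum : ∫ ω, ∑ j, α j * e j ω ∂P = 0 := by
    rw [integral_finsetSum _ fun j _ => ((he j).integrable one_le_two).const_mul (α j)]
    simp [integral_const_mul, hmean]
  rw [← variance_sum_mul_of_iIndepFun he hind,
    variance_of_integral_eq_zero (memLp_two_sum_mul he α).aemeasurable hmean_sum]

end LinearCombination

section ComplexNoise

open Complex

variable {Ω ι : Type*} [Fintype ι] {a b : ι → Ω → ℝ}

lemma norm_sq_sum_mul_eq_re_sq_add_im_sq (c : ι → ℂ) (ω : Ω) :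
    ‖∑ k, c k * (a k ω + b k ω * I)‖ ^ 2 =
      (∑ j, Sum.elim (fun k => (c k).re) (fun k => -(c k).im) j * Sum.elim a b j ω) ^ 2 +
      (∑ j, Sum.elim (fun k => (c k).im) (fun k => (c k).re) j * Sum.elim a b j ω) ^ 2 := by
  have hre : ∀ k, (c k * (a k ω + b k ω * I)).re = (c k).re * a k ω + -(c k).im * b k ω :=
    fun k => by simp; ring
  have him : ∀ k, (c k * (a k ω + b k ω * I)).im = (c k).im * a k ω + (c k).re * b k ω :=
    fun k => by simp; ring
  rw [Complex.sq_norm, normSq_apply, re_sum, im_sum, Fintype.sum_sum_type, Fintype.sum_sum_type]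
  simp only [hre, him, Sum.elim_inl, Sum.elim_inr, ← Finset.sum_add_distrib]
  ring

variable [MeasurableSpace Ω] {P : Measure Ω}

lemma integrable_norm_sq_sum_mul (ha : ∀ k, MemLp (a k) 2 P) (hb : ∀ k, MemLp (b k) 2 P)
    (c : ι → ℂ) :
    Integrable (fun ω => ‖∑ k, c k * (a k ω + b k ω * I)‖ ^ 2) P := by
  have he : ∀ j, MemLp (Sum.elim a b j) 2 P := by rintro (k | k); exacts [ha k, hb k]
  simp only [norm_sq_sum_mul_eq_re_sq_add_im_sq]
  exact (memLp_two_sum_mul he _).integrable_sq.add (memLp_two_sum_mul he _).integrable_sq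

lemma integral_norm_sq_sum_mul [IsFiniteMeasure P] (ha : ∀ k, MemLp (a k) 2 P)
    (hb : ∀ k, MemLp (b k) 2 P) (ha0 : ∀ k, P[a k] = 0) (hb0 : ∀ k, P[b k] = 0)
    (hind : iIndepFun (Sum.elim a b) P) (c : ι → ℂ) :
    ∫ ω, ‖∑ k, c k * (a k ω + b k ω * I)‖ ^ 2 ∂P =
      ∑ k, ‖c k‖ ^ 2 * (Var[a k; P] + Var[b k; P]) := by
  have he : ∀ j, MemLp (Sum.elim a b j) 2 P := by rintro (k | k); exacts [ha k, hb k]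
  have he0 : ∀ j, P[Sum.elim a b j] = 0 := by rintro (k | k); exacts [ha0 k, hb0 k]
  simp only [norm_sq_sum_mul_eq_re_sq_add_im_sq]
  rw [integral_add (memLp_two_sum_mul he _).integrable_sq (memLp_two_sum_mul he _).integrable_sq,
    integral_sq_sum_mul_of_iIndepFun_s13 he he0 hind, integral_sq_sum_mul_of_iIndepFun_s13 he he0 hind,
    Fintype.sum_sum_type, Fintype.sum_sum_type, ← Finset.sum_add_distrib,
    ← Finset.sum_add_distrib, ← Finset.sum_add_distrib]
  refine Finset.sum_congr rfl fun k _ => ?_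
  simp only [Sum.elim_inl, Sum.elim_inr, Complex.sq_norm, normSq_apply]
  ring

end ComplexNoise

section MatrixIdentities

variable {𝕜 : Type*} [RCLike 𝕜] {m n : Type*} [Fintype m] [Fintype n] [DecidableEq n]

lemma sum_sum_norm_sq_conjTranspose_apply {H : Matrix m n 𝕜} {c : ℝ}
    (hH : Hᴴ * H = (c : 𝕜) • 1) : ∑ i, ∑ k, ‖Hᴴ i k‖ ^ 2 = Fintype.card n * c := by
  rw [← nsmul_eq_mul, ← Finset.card_univ, ← Finset.sum_const]
  refine Finset.sum_congr rfl fun i _ => ?_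
  have hii := congrFun (congrFun hH i) i
  simp only [mul_apply, conjTranspose_apply, Matrix.smul_apply, one_apply_eq, smul_eq_mul,
    mul_one, RCLike.star_def, RCLike.conj_mul] at hii
  simp only [conjTranspose_apply, norm_star]
  exact_mod_cast hii

lemma sub_smul_conjTranspose_mulVec_eq_s13 {F : Type*} [Field F] [StarRing F] {H : Matrix m n F}
    {c s t : F} (hH : Hᴴ * H = c • 1) (hc : c ≠ 0) (hst : s * t = 1) (x : n → F) (w : m → F)
    (i : n) :
    x i - s * (1 / c) * (Hᴴ *ᵥ fun k => t * (H *ᵥ x) k + w k) i =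
      -(s * (1 / c)) * (Hᴴ *ᵥ w) i := by
  have hsplit : (fun k => t * (H *ᵥ x) k + w k) = t • (H *ᵥ x) + w := rfl
  rw [hsplit, mulVec_add, mulVec_smul, mulVec_mulVec, hH, smul_mulVec, one_mulVec]
  simp only [Pi.add_apply, Pi.smul_apply, smul_eq_mul]
  field_simp
  linear_combination (-c * x i) * hst

end MatrixIdentities

section GaussianNoise

variable {Ω ι : Type*} [MeasurableSpace Ω] {P : Measure Ω} [IsFiniteMeasure P] [Fintype ι]
  {a b : ι → Ω → ℝ} {v : NNReal}

lemma integral_sum_norm_sq_mulVec_of_gaussianReal {κ : Type*} [Fintype κ] (A : Matrix κ ι ℂ)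
    (ham : ∀ k, Measurable (a k)) (hbm : ∀ k, Measurable (b k))
    (hlawa : ∀ k, P.map (a k) = gaussianReal 0 v) (hlawb : ∀ k, P.map (b k) = gaussianReal 0 v)
    (hind : iIndepFun (Sum.elim a b) P) :
    ∫ ω, ∑ i, ‖(A *ᵥ fun k => a k ω + b k ω * Complex.I) i‖ ^ 2 ∂P =
      2 * v * ∑ i, ∑ k, ‖A i k‖ ^ 2 := by
  have ha k := memLp_two_of_map_eq_gaussianReal (ham k) (hlawa k)
  have hb k := memLp_two_of_map_eq_gaussianReal (hbm k) (hlawb k)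
  simp only [mulVec, dotProduct]
  rw [integral_finsetSum _ fun i _ => integrable_norm_sq_sum_mul ha hb (A i), Finset.mul_sum]
  refine Finset.sum_congr rfl fun i _ => ?_
  rw [integral_norm_sq_sum_mul ha hb
    (fun k => integral_eq_zero_of_map_eq_gaussianReal (ham k) (hlawa k))
    (fun k => integral_eq_zero_of_map_eq_gaussianReal (hbm k) (hlawb k)) hind, Finset.mul_sum]
  simp only [variance_eq_of_map_eq_gaussianReal (ham _) (hlawa _),
    variance_eq_of_map_eq_gaussianReal (hbm _) (hlawb _)]
  exact Finset.sum_congr rfl fun k _ => by ring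

end GaussianNoise

theorem mse_zf_estimator_tendsto_floor_general (Ω : Type*) [MeasurableSpace Ω]
    (P : Measure Ω) [IsProbabilityMeasure P] (K Nt : ℕ) (hK : 1 ≤ K) (hNt : 1 ≤ Nt)
    (σq : ℝ)
    (H : ℝ → Matrix (Fin K) (Fin Nt) ℂ)
    (hH : ∀ ρ : ℝ, 0 < ρ → (H ρ)ᴴ * H ρ = (K : ℂ) • 1)
    (x : Fin Nt → ℂ)
    (a b : ℝ → Ω → Fin K → ℝ)
    (ham : ∀ ρ k, Measurable fun ω => a ρ ω k) (hbm : ∀ ρ k, Measurable fun ω => b ρ ω k)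
    (hindep : ∀ ρ : ℝ, 0 < ρ → iIndepFun
      (Sum.elim (fun k ω => a ρ ω k) (fun k ω => b ρ ω k)) P)
    (hlawa : ∀ (ρ : ℝ), 0 < ρ → ∀ k, P.map (fun ω => a ρ ω k) =
      gaussianReal 0 (Real.toNNReal ((1 + σq ^ 2 * ρ / Nt) / 2)))
    (hlawb : ∀ (ρ : ℝ), 0 < ρ → ∀ k, P.map (fun ω => b ρ ω k) =
      gaussianReal 0 (Real.toNNReal ((1 + σq ^ 2 * ρ / Nt) / 2)))
    (n' : ℝ → Ω → Fin K → ℂ) (hn' : ∀ ρ ω k, n' ρ ω k = a ρ ω k + b ρ ω k * Complex.I)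
    (MSE : ℝ → ℝ)
    (hMSE : ∀ ρ : ℝ, MSE ρ = (1 / Nt : ℝ) * ∫ ω, ∑ i,
      ‖x i - (Real.sqrt (Nt / ρ) : ℂ) * (1 / K : ℂ) *
        (H ρ)ᴴ.mulVec (fun k => (Real.sqrt (ρ / Nt) : ℂ) * (H ρ).mulVec x k + n' ρ ω k) i‖ ^ 2
      ∂P) :
    Tendsto MSE atTop (nhds (σq ^ 2 / K)) := by
  have hKpos : (0 : ℝ) < K := by exact_mod_cast hK
  have hNtpos : (0 : ℝ) < Nt := by exact_mod_cast hNt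
  have hclosed : ∀ ρ : ℝ, 0 < ρ → MSE ρ = Nt / (ρ * K) + σq ^ 2 / K := by
    intro ρ hρ
    have hst : (Real.sqrt (Nt / ρ) : ℂ) * (Real.sqrt (ρ / Nt) : ℂ) = 1 := by
      rw [← Complex.ofReal_mul, ← Real.sqrt_mul (by positivity),
        show (Nt : ℝ) / ρ * (ρ / Nt) = 1 by field_simp, Real.sqrt_one, Complex.ofReal_one]
    have hv : (Real.toNNReal ((1 + σq ^ 2 * ρ / Nt) / 2) : ℝ) = (1 + σq ^ 2 * ρ / Nt) / 2 :=
      Real.coe_toNNReal _ (by positivity)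
    have hnoise : ∀ ω, n' ρ ω = fun k => a ρ ω k + b ρ ω k * Complex.I :=
      fun ω => funext (hn' ρ ω)
    rw [hMSE ρ]
    simp_rw [sub_smul_conjTranspose_mulVec_eq_s13 (hH ρ hρ) (by exact_mod_cast hKpos.ne') hst, hnoise,
      norm_mul, mul_pow, ← Finset.mul_sum]
    rw [integral_const_mul, integral_sum_norm_sq_mulVec_of_gaussianReal _ (ham ρ) (hbm ρ)
      (hlawa ρ hρ) (hlawb ρ hρ) (hindep ρ hρ)]
    have hHK : (H ρ)ᴴ * H ρ = ((K : ℝ) : ℂ) • 1 := by rw [hH ρ hρ, Complex.ofReal_natCast]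
    simp only [sum_sum_norm_sq_conjTranspose_apply (c := K) hHK, hv, Fintype.card_fin, norm_neg,
      norm_mul, Complex.norm_real, Real.norm_of_nonneg (Real.sqrt_nonneg _), norm_div, norm_one,
      Complex.norm_natCast, mul_pow, Real.sq_sqrt (div_pos hNtpos hρ).le]
    field_simp
  have hlim : Tendsto (fun ρ : ℝ => Nt / (ρ * K) + σq ^ 2 / K) atTop (nhds (σq ^ 2 / K)) := by
    simpa using ((tendsto_inv_atTop_zero.const_mul ((Nt : ℝ) / K)).add_const (σq ^ 2 / K)).congr
      fun ρ => by ring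
  exact hlim.congr' (eventually_gt_atTop 0 |>.mono fun ρ hρ => (hclosed ρ hρ).symm)

/-- Corollary 4: under the Gaussian approximation of the quantization error and the
orthogonality condition `Hᴴ·H = K·I`, the MSE of the zero-forcing-type estimator converges
to the floor `σ_q²/K` as the transmit SNR `ρ` tends to infinity. -/
theorem mse_zf_estimator_tendsto_floor (Ω : Type*) [MeasurableSpace Ω]
    (P : Measure Ω) [IsProbabilityMeasure P] (K Nt : ℕ) (hK : 1 ≤ K) (hNt : 1 ≤ Nt)
    (σq : ℝ) (hσq : 0 ≤ σq)
    (H : ℝ → Matrix (Fin K) (Fin Nt) ℂ)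
    (hH : ∀ ρ : ℝ, 0 < ρ → (H ρ)ᴴ * H ρ = (K : ℂ) • 1)
    (x : Fin Nt → ℂ)
    (a b : ℝ → Ω → Fin K → ℝ)
    (ham : ∀ ρ k, Measurable fun ω => a ρ ω k) (hbm : ∀ ρ k, Measurable fun ω => b ρ ω k)
    (hindep : ∀ ρ : ℝ, 0 < ρ → iIndepFun
      (Sum.elim (fun k ω => a ρ ω k) (fun k ω => b ρ ω k)) P)
    (hlawa : ∀ (ρ : ℝ), 0 < ρ → ∀ k, P.map (fun ω => a ρ ω k) =
      gaussianReal 0 (Real.toNNReal ((1 + σq ^ 2 * ρ / Nt) / 2)))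
    (hlawb : ∀ (ρ : ℝ), 0 < ρ → ∀ k, P.map (fun ω => b ρ ω k) =
      gaussianReal 0 (Real.toNNReal ((1 + σq ^ 2 * ρ / Nt) / 2)))
    (n' : ℝ → Ω → Fin K → ℂ) (hn' : ∀ ρ ω k, n' ρ ω k = a ρ ω k + b ρ ω k * Complex.I)
    (MSE : ℝ → ℝ)
    (hMSE : ∀ ρ : ℝ, MSE ρ = (1 / Nt : ℝ) * ∫ ω, ∑ i,
      ‖x i - (Real.sqrt (Nt / ρ) : ℂ) * (1 / K : ℂ) *
        (H ρ)ᴴ.mulVec (fun k => (Real.sqrt (ρ / Nt) : ℂ) * (H ρ).mulVec x k + n' ρ ω k) i‖ ^ 2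
      ∂P) :
    Tendsto MSE atTop (nhds (σq ^ 2 / K)) :=
  mse_zf_estimator_tendsto_floor_general Ω P K Nt hK hNt σq H hH x a b ham hbm hindep hlawa hlawb n'
    hn' MSE hMSE
end
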